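/- If a series c over X = {x₀,x₁} has well-defined relative degree r, then the action of the affine feedback group is free at c: if c ∘̃ d_δ = c for some pair d_δ = (d_L, d_R) with d_L non-proper, then d_δ = (1,0). -/

import Mathlib

/-- Formal power series over the alphabet `X = {x₀, x₁}` (encoded as `Bool`,
with `x₀ = false` and `x₁ = true`). -/
abbrev FPS := List Bool → ℝ

/-- The letter `x₀`. -/
def x₀ : Bool := false

/-- The letter `x₁`. -/
def x₁ : Bool := true

/-- Shuffle product of formal power series, via the left-quotient recursion. -/
noncomputable def shuffle : (List Bool → ℝ) → (List Bool → ℝ) → List Bool → ℝ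
  | c, d, [] => c [] * d []
  | c, d, x :: w => shuffle (fun u => c (x :: u)) d w + shuffle c (fun u => d (x :: u)) w

/-- The series `1` (the empty word). -/
noncomputable def oneF : FPS := fun w => match w with | [] => 1 | _ => 0

/-- The series corresponding to a single word. -/
noncomputable def ind (η : List Bool) : FPS := fun w => if w = η then 1 else 0

/-- Left catenation of the series `e` by a letter `x`: the series `x e`. -/
noncomputable def pre (x : Bool) (e : FPS) : FPS :=
  fun w => match w with
  | [] => 0
  | y :: u => if y = x then e u else 0

/-- The word-indexed family of endomorphisms `φ_d`, determined by
`φ_d(x₀)(e) = x₀ e` and `φ_d(x₁)(e) = x₁(d_L ⧢ e) + x₀(d_R ⧢ e)`. -/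
noncomputable def phiW (d : FPS × FPS) : List Bool → FPS → FPS
  | [], e => e
  | x :: η, e =>
      if x then pre x₁ (shuffle d.1 (phiW d η e)) + pre x₀ (shuffle d.2 (phiW d η e))
      else pre x₀ (phiW d η e)

/-- The mixed composition product `c ∘̃ d_δ = Σ_η (c,η) φ_d(η)(1)`.
(For each word `w` only the finitely many `η` with `|η| ≤ |w|` contribute.) -/
noncomputable def mixedComp (c : FPS) (d : FPS × FPS) : FPS :=
  fun w => ∑' η : List Bool, c η * phiW d η oneF w

/-- The natural part `c_N = Σ_k (c, x₀^k) x₀^k` of a series. -/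
noncomputable def natPart (c : FPS) : FPS :=
  fun w => if w = List.replicate w.length x₀ then c w else 0

/-- `c` has relative degree `r ≥ 1`: `r` is the largest integer with
`supp(c_F) ⊆ x₀^{r-1} X*`, and `x₀^{r-1} x₁ ∈ supp(c)`, where `c_F = c - c_N`. -/
def HasRelDeg (c : FPS) (r : ℕ) : Prop :=
  1 ≤ r ∧
  (∀ w, (c - natPart c) w ≠ 0 → List.replicate (r - 1) x₀ <+: w) ∧
  ¬(∀ w, (c - natPart c) w ≠ 0 → List.replicate r x₀ <+: w) ∧
  c (List.replicate (r - 1) x₀ ++ [x₁]) ≠ 0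

/-!
Relative degree `r` forces every coefficient of `c` that involves `x₁` to lie in
`x₀^{r-1} X*`, so a fixed point `c ∘̃ d = c` descends to the left quotient `b = (x₀^{r-1})⁻¹ c`,
which satisfies `b ∘̃ d = b` and `b(x₁) ≠ 0`. The mixed composition obeys the left-quotient
recursions `(b ∘̃ d)(x₁ v) = (d_L ⧢ (x₁⁻¹ b ∘̃ d))(v)` and
`(b ∘̃ d)(x₀ v) = (x₀⁻¹ b ∘̃ d)(v) + (d_R ⧢ (x₁⁻¹ b ∘̃ d))(v)`, and `(b ∘̃ d)(w)` sees `d` only on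
words shorter than `w`. So if `d` agrees with `(1, 0)` on words shorter than `v`, comparing the
coefficients of `x₁ v` and `x₀ v` leaves exactly `(d_L - 1)(v) b(x₁) = 0` and `d_R(v) b(x₁) = 0`;
induction on `|v|` gives `d = (1, 0)`.
-/

section Shuffle

variable {q q' p p' : FPS}

theorem shuffle_cons (q p : FPS) (x : Bool) (w : List Bool) :
    shuffle q p (x :: w) = shuffle (fun u => q (x :: u)) p w + shuffle q (fun u => p (x :: u)) w :=
  rfl

theorem shuffle_congr {w : List Bool} (hq : ∀ u, u.length ≤ w.length → q u = q' u)
    (hp : ∀ u, u.length ≤ w.length → p u = p' u) : shuffle q p w = shuffle q' p' w := by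
  induction w generalizing q q' p p' with
  | nil => simp only [shuffle, hq [] le_rfl, hp [] le_rfl]
  | cons x w ih =>
    rw [shuffle_cons, shuffle_cons,
      ih (fun u hu => hq (x :: u) (by simpa using hu))
        (fun u hu => hp u (by simp only [List.length_cons]; omega)),
      ih (fun u hu => hq u (by simp only [List.length_cons]; omega))
        (fun u hu => hp (x :: u) (by simpa using hu))]

theorem shuffle_zero_left (p : FPS) (w : List Bool) : shuffle 0 p w = 0 := by
  induction w generalizing p with
  | nil => simp [shuffle]
  | cons x w ih =>
    rw [shuffle_cons, show (fun u => (0 : FPS) (x :: u)) = 0 from rfl, ih, ih, add_zero]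

theorem shuffle_zero_right (q : FPS) (w : List Bool) : shuffle q 0 w = 0 := by
  induction w generalizing q with
  | nil => simp [shuffle]
  | cons x w ih =>
    rw [shuffle_cons, show (fun u => (0 : FPS) (x :: u)) = 0 from rfl, ih, ih, add_zero]

theorem shuffle_eq_zero_of_right {w : List Bool} (hp : ∀ u, u.length ≤ w.length → p u = 0) :
    shuffle q p w = 0 :=
  (shuffle_congr (fun _ _ => rfl) hp).trans (shuffle_zero_right q w)

theorem shuffle_oneF_left (p : FPS) (w : List Bool) : shuffle oneF p w = p w := by
  induction w generalizing p with
  | nil => simp [shuffle, oneF]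
  | cons x w ih => rw [shuffle_cons, ih, show (fun u => oneF (x :: u)) = 0 from rfl,
      shuffle_zero_left, zero_add]

theorem shuffle_add_right (q p p' : FPS) (w : List Bool) :
    shuffle q (p + p') w = shuffle q p w + shuffle q p' w := by
  induction w generalizing q p p' with
  | nil => simp [shuffle, mul_add]
  | cons x w ih =>
    rw [shuffle_cons, shuffle_cons, shuffle_cons, ih, show (fun u => (p + p') (x :: u)) =
      (fun u => p (x :: u)) + fun u => p' (x :: u) from rfl, ih]
    ring

theorem shuffle_smul_right (q p : FPS) (a : ℝ) (w : List Bool) :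
    shuffle q (a • p) w = a * shuffle q p w := by
  induction w generalizing q p with
  | nil => simp only [shuffle, Pi.smul_apply, smul_eq_mul]; ring
  | cons x w ih =>
    rw [shuffle_cons, shuffle_cons, ih, show (fun u => (a • p) (x :: u)) =
      a • fun u => p (x :: u) from rfl, ih]
    ring

theorem shuffle_sum_right {ι : Type*} (q : FPS) (s : Finset ι) (f : ι → FPS) (w : List Bool) :
    shuffle q (∑ i ∈ s, f i) w = ∑ i ∈ s, shuffle q (f i) w :=
  map_sum (AddMonoidHom.mk' (fun p => shuffle q p w) (shuffle_add_right q · · w)) f s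

/-- Only the split of `w` into `w` and the empty word sees the difference of `q` and `q'`. -/
theorem shuffle_eq_add_mul_of_eqOn {w : List Bool} (h : ∀ u, u.length < w.length → q u = q' u) :
    shuffle q p w = shuffle q' p w + (q w - q' w) * p [] := by
  induction w generalizing q q' p with
  | nil => simp only [shuffle]; ring
  | cons x w ih =>
    rw [shuffle_cons, shuffle_cons, ih (fun u hu => h (x :: u) (by simpa using hu)),
      shuffle_congr (fun u hu => h u (by simp only [List.length_cons]; omega)) (fun _ _ => rfl)]
    ring

end Shuffle

section MixedComp

variable (c : FPS) (d : FPS × FPS)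

theorem phiW_apply_eq_zero_of_length_lt (e : FPS) :
    ∀ (η u : List Bool), u.length < η.length → phiW d η e u = 0
  | x :: _, [], _ => by cases x <;> simp [phiW, pre]
  | x :: η, y :: u, h => by
    have hη : ∀ v, v.length ≤ u.length → phiW d η e v = 0 := fun v hv =>
      phiW_apply_eq_zero_of_length_lt e η v (by simp only [List.length_cons] at h; omega)
    cases x
    · simp [phiW, pre, hη u le_rfl]
    · simp [phiW, pre, shuffle_eq_zero_of_right hη]

noncomputable def wordsLengthLE (n : ℕ) : Finset (List Bool) :=
  (List.finite_length_le Bool n).toFinset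

theorem mem_wordsLengthLE {n : ℕ} {η : List Bool} : η ∈ wordsLengthLE n ↔ η.length ≤ n := by
  simp [wordsLengthLE]

theorem sum_wordsLengthLE_succ (n : ℕ) (f : List Bool → ℝ) :
    ∑ η ∈ wordsLengthLE (n + 1), f η =
      f [] + ∑ η ∈ wordsLengthLE n, f (false :: η) + ∑ η ∈ wordsLengthLE n, f (true :: η) := by
  have h : wordsLengthLE (n + 1) = insert []
      ((wordsLengthLE n).image (false :: ·) ∪ (wordsLengthLE n).image (true :: ·)) := by
    ext η
    cases η with
    | nil => simp [mem_wordsLengthLE]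
    | cons x t => cases x <;> simp [mem_wordsLengthLE]
  rw [h, Finset.sum_insert (by simp), Finset.sum_union (by simp [Finset.disjoint_left]),
    Finset.sum_image (fun _ _ _ _ h => List.cons_injective h),
    Finset.sum_image (fun _ _ _ _ h => List.cons_injective h), add_assoc]

theorem mixedComp_eq_sum {n : ℕ} {w : List Bool} (hw : w.length ≤ n) :
    mixedComp c d w = ∑ η ∈ wordsLengthLE n, c η * phiW d η oneF w :=
  tsum_eq_sum fun η hη => by
    rw [phiW_apply_eq_zero_of_length_lt d oneF η w
      (by rw [mem_wordsLengthLE] at hη; omega), mul_zero]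

theorem sum_mul_shuffle_phiW (q : FPS) (u : List Bool) :
    ∑ η ∈ wordsLengthLE u.length, c η * shuffle q (phiW d η oneF) u =
      shuffle q (mixedComp c d) u := by
  simp only [← shuffle_smul_right, ← shuffle_sum_right]
  exact shuffle_congr (fun _ _ => rfl) fun v hv => by simp [mixedComp_eq_sum c d hv]

theorem mixedComp_nil : mixedComp c d [] = c [] := by
  rw [mixedComp, tsum_eq_single [] fun η hη => by
    rw [phiW_apply_eq_zero_of_length_lt d oneF η [] (List.length_pos_of_ne_nil hη), mul_zero]]
  simp [phiW, oneF]

theorem mixedComp_cons_true (u : List Bool) :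
    mixedComp c d (true :: u) = shuffle d.1 (mixedComp (fun v => c (true :: v)) d) u := by
  rw [mixedComp_eq_sum c d le_rfl, List.length_cons, sum_wordsLengthLE_succ,
    ← sum_mul_shuffle_phiW]
  simp [phiW, pre, oneF, x₀, x₁]

theorem mixedComp_cons_false (u : List Bool) :
    mixedComp c d (false :: u) = mixedComp (fun v => c (false :: v)) d u +
      shuffle d.2 (mixedComp (fun v => c (true :: v)) d) u := by
  rw [mixedComp_eq_sum c d le_rfl, List.length_cons, sum_wordsLengthLE_succ,
    ← sum_mul_shuffle_phiW, mixedComp_eq_sum _ d le_rfl]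
  simp [phiW, pre, oneF, x₀, x₁]

theorem mixedComp_zero_left : mixedComp 0 d = 0 := by
  funext w
  simp [mixedComp]

end MixedComp

theorem mixedComp_oneF_zero (c : FPS) : mixedComp c (oneF, 0) = c := by
  funext w
  induction w generalizing c with
  | nil => exact mixedComp_nil c _
  | cons x u ih =>
    cases x
    · rw [mixedComp_cons_false, ih, shuffle_zero_left, add_zero]
    · rw [mixedComp_cons_true, shuffle_oneF_left, ih]

theorem mixedComp_congr {d d' : FPS × FPS} {n : ℕ}
    (h : ∀ v, v.length < n → d.1 v = d'.1 v ∧ d.2 v = d'.2 v) (c : FPS) {w : List Bool}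
    (hw : w.length ≤ n) : mixedComp c d w = mixedComp c d' w := by
  induction n generalizing c w with
  | zero => rw [List.length_eq_zero_iff.mp (Nat.le_zero.mp hw), mixedComp_nil, mixedComp_nil]
  | succ n ih =>
    have ih' := ih fun v hv => h v (by omega)
    match w, hw with
    | [], _ => rw [mixedComp_nil, mixedComp_nil]
    | x :: u, hxu =>
      have hu : u.length ≤ n := by simpa using hxu
      cases x
      · rw [mixedComp_cons_false, mixedComp_cons_false, ih' _ hu,
          shuffle_congr (fun v hv => (h v (by omega)).2) (fun v hv => ih' _ (by omega))]
      · rw [mixedComp_cons_true, mixedComp_cons_true,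
          shuffle_congr (fun v hv => (h v (by omega)).1) (fun v hv => ih' _ (by omega))]

theorem mixedComp_tail_false_eq_self {c : FPS} {d : FPS × FPS} (hc : mixedComp c d = c)
    (hx₁ : ∀ v, c (true :: v) = 0) :
    mixedComp (fun v => c (false :: v)) d = fun v => c (false :: v) := by
  funext u
  have h := mixedComp_cons_false c d u
  rwa [hc, show (fun v => c (true :: v)) = 0 from funext hx₁, mixedComp_zero_left,
    shuffle_zero_right, add_zero, eq_comm] at h

theorem eq_oneF_zero_apply_of_mixedComp_eq_self {b : FPS} {d : FPS × FPS}
    (hb : mixedComp b d = b) (hb₁ : b [true] ≠ 0) {v : List Bool}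
    (hlt : ∀ u, u.length < v.length → d.1 u = oneF u ∧ d.2 u = 0) :
    d.1 v = oneF v ∧ d.2 v = 0 := by
  have hid : ∀ e u, u.length ≤ v.length → mixedComp e d u = e u := fun e u hu =>
    (mixedComp_congr (d' := (oneF, 0)) hlt e hu).trans (congrFun (mixedComp_oneF_zero e) u)
  set t : FPS := fun u => b (true :: u)
  have hL : (d.1 v - oneF v) * b [true] = 0 := by
    have : b (true :: v) = b (true :: v) + (d.1 v - oneF v) * b [true] := calc
      b (true :: v) = mixedComp b d (true :: v) := by rw [hb]
      _ = shuffle d.1 t v := by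
        rw [mixedComp_cons_true]
        exact shuffle_congr (fun _ _ => rfl) fun u hu => hid t u hu
      _ = shuffle oneF t v + (d.1 v - oneF v) * t [] :=
        shuffle_eq_add_mul_of_eqOn fun u hu => (hlt u hu).1
      _ = b (true :: v) + (d.1 v - oneF v) * b [true] := by rw [shuffle_oneF_left]
    linarith
  have hR : d.2 v * b [true] = 0 := by
    have : b (false :: v) = b (false :: v) + d.2 v * b [true] := calc
      b (false :: v) = mixedComp b d (false :: v) := by rw [hb]
      _ = b (false :: v) + shuffle d.2 t v := by
        rw [mixedComp_cons_false, hid _ v le_rfl]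
        congr 1
        exact shuffle_congr (fun _ _ => rfl) fun u hu => hid t u hu
      _ = b (false :: v) + (shuffle 0 t v + (d.2 v - 0) * t []) := by
        rw [shuffle_eq_add_mul_of_eqOn (q' := 0) fun u hu => (hlt u hu).2]
        rfl
      _ = b (false :: v) + d.2 v * b [true] := by rw [shuffle_zero_left, zero_add, sub_zero]
    linarith
  exact ⟨sub_eq_zero.mp ((mul_eq_zero.mp hL).resolve_right hb₁),
    (mul_eq_zero.mp hR).resolve_right hb₁⟩

theorem eq_oneF_zero_of_mixedComp_eq_self {b : FPS} {d : FPS × FPS} (hb : mixedComp b d = b)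
    (hb₁ : b [true] ≠ 0) : d = (oneF, 0) := by
  have key : ∀ v : List Bool, d.1 v = oneF v ∧ d.2 v = 0 := by
    intro v
    induction h : v.length using Nat.strong_induction_on generalizing v with
    | _ n ih =>
      exact eq_oneF_zero_apply_of_mixedComp_eq_self hb hb₁ fun u hu => ih _ (h ▸ hu) u rfl
  exact Prod.ext (funext fun v => (key v).1) (funext fun v => (key v).2)

namespace HasRelDeg

variable {c : FPS} {r : ℕ}

theorem apply_replicate_append_true (h : HasRelDeg c r) {k : ℕ} (hk : k < r - 1)
    (v : List Bool) : c (List.replicate k x₀ ++ true :: v) = 0 := by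
  by_contra hne
  have hnat : natPart c (List.replicate k x₀ ++ true :: v) = 0 := if_neg fun heq => by
    have := List.eq_of_mem_replicate (heq ▸ (by simp : true ∈ List.replicate k x₀ ++ true :: v))
    simp [x₀] at this
  have hpre := h.2.1 (List.replicate k x₀ ++ true :: v) (by simpa [hnat] using hne)
  have := hpre.getElem (i := k) (by simpa using hk)
  simp [x₀] at this

theorem mixedComp_quot_eq_self (h : HasRelDeg c r) {d : FPS × FPS} (hc : mixedComp c d = c) :
    ∀ k ≤ r - 1, mixedComp (fun v => c (List.replicate k x₀ ++ v)) d =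
      fun v => c (List.replicate k x₀ ++ v)
  | 0, _ => hc
  | k + 1, hk => by
    simpa [List.replicate_succ', List.append_assoc, x₀] using
      mixedComp_tail_false_eq_self (mixedComp_quot_eq_self h hc k (by omega))
        (h.apply_replicate_append_true (by omega))

end HasRelDeg

theorem free_action_of_relDeg_general (c : FPS) (r : ℕ) (h : HasRelDeg c r)
    (d : FPS × FPS) (hfix : mixedComp c d = c) :
    d = (oneF, (0 : FPS)) :=
  eq_oneF_zero_of_mixedComp_eq_self (h.mixedComp_quot_eq_self hfix (r - 1) le_rfl) h.2.2.2

/-- The affine feedback group acts freely on series with well-defined relative degree. -/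
theorem free_action_of_relDeg (c : FPS) (r : ℕ) (h : HasRelDeg c r)
    (d : FPS × FPS) (hd : d.1 [] ≠ 0) (hfix : mixedComp c d = c) :
    d = (oneF, (0 : FPS)) :=
  free_action_of_relDeg_general c r h d hfix
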